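/- Let Ωᵢ = B̄(ωᵢ; rᵢ) (i = 1, …, n, n > 1) be closed balls with possibly different radii rᵢ ≥ 0 in a Hilbert space X with ⋂ᵢ Ωᵢ = ∅. Then D(x) = max_i d(x, Ωᵢ) = max_i (‖x − ωᵢ‖ − rᵢ), and D has a unique minimizer on X. -/

import Mathlib

/-!
The distance from `x` to `B̄(ωᵢ; rᵢ)` is `max (‖x - ωᵢ‖ - rᵢ) 0`. As the balls have no common
point, some `‖x - ωᵢ‖ - rᵢ` is positive, so the truncation at `0` disappears in the maximum.

Let `m` be the infimum of `D`. If `D x` and `D y` are below `m + δ`, take a ball `i` active at the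
midpoint of `x` and `y`: by the parallelogram law around `ωᵢ`,
`‖x - y‖² ≤ 4 ((m + rᵢ + δ)² - (m + rᵢ)²) = O(δ)`. So the points where `D` is almost minimal
form a Cauchy filter, whose limit is a minimizer, and two minimizers must coincide.
-/

open Metric Filter Topology Set

theorem Metric.infDist_closedBall {E : Type*} [NormedAddCommGroup E] [NormedSpace ℝ E]
    (x c : E) {R : ℝ} (hR : 0 ≤ R) :
    infDist x (closedBall c R) = max (dist x c - R) 0 := by
  refine le_antisymm ?_ (max_le ?_ infDist_nonneg)
  · rcases le_or_gt (dist x c) R with hxc | hxc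
    · rw [infDist_zero_of_mem (mem_closedBall.2 hxc)]
      exact le_max_right _ _
    · have hd : 0 < dist x c := hR.trans_lt hxc
      have ht₀ : 0 ≤ R / dist x c := by positivity
      have ht₁ : R / dist x c ≤ 1 := div_le_one_of_le₀ hxc.le hd.le
      calc infDist x (closedBall c R) ≤ dist (AffineMap.lineMap c x (R / dist x c)) x := by
            rw [dist_comm]
            refine infDist_le_dist_of_mem (mem_closedBall.2 (le_of_eq ?_))
            rw [dist_lineMap_left, dist_comm c x, Real.norm_of_nonneg ht₀, div_mul_cancel₀ _ hd.ne']
        _ = dist x c - R := by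
            rw [dist_lineMap_right, dist_comm c, Real.norm_of_nonneg (sub_nonneg.2 ht₁), sub_mul,
              one_mul, div_mul_cancel₀ _ hd.ne']
        _ ≤ _ := le_max_left _ _
  · refine (le_infDist (nonempty_closedBall.2 hR)).2 fun z hz => ?_
    linarith [dist_triangle x z c, mem_closedBall.1 hz]

theorem dist_sq_le_of_le_dist_midpoint {V : Type*} [NormedAddCommGroup V] [InnerProductSpace ℝ V]
    {x y c : V} {a t : ℝ} (hx : dist x c ≤ a) (hy : dist y c ≤ a) (ht : 0 ≤ t)
    (hmid : t ≤ dist (midpoint ℝ x y) c) : dist x y ^ 2 ≤ 4 * (a ^ 2 - t ^ 2) := by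
  have apollonius :=
    EuclideanGeometry.dist_sq_add_dist_sq_eq_two_mul_dist_midpoint_sq_add_half_dist_sq c x y
  rw [dist_comm c x, dist_comm c y, dist_comm c] at apollonius
  nlinarith [pow_le_pow_left₀ dist_nonneg hx 2, pow_le_pow_left₀ dist_nonneg hy 2,
    pow_le_pow_left₀ ht hmid 2]

theorem existsUnique_isMinOn_of_forall_dist_lt {α : Type*} [MetricSpace α] [CompleteSpace α]
    {f : α → ℝ} (hf : Continuous f) {m : ℝ} (hm : IsGLB (range f) m)
    (hwp : ∀ ε > 0, ∃ δ > 0, ∀ x y, f x < m + δ → f y < m + δ → dist x y < ε) :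
    ∃! x, IsMinOn f univ x := by
  have hlt : ∀ δ > 0, ∃ x, f x < m + δ := fun δ hδ => by
    obtain ⟨_, ⟨x, rfl⟩, -, hx⟩ := hm.exists_between (lt_add_of_pos_right m hδ)
    exact ⟨x, hx⟩
  let F := comap f (𝓝 m)
  have hF : F.NeBot := comap_neBot fun t ht => by
    obtain ⟨ε, hε, hball⟩ := Metric.mem_nhds_iff.1 ht
    obtain ⟨x, hx⟩ := hlt ε hε
    refine ⟨x, hball ?_⟩
    rw [Real.ball_eq_Ioo]
    exact ⟨by linarith [hm.1 (mem_range_self x)], hx⟩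
  have hcauchy : Cauchy F := Metric.cauchy_iff.2 ⟨hF, fun ε hε => by
    obtain ⟨δ, hδ, hdist⟩ := hwp ε hε
    exact ⟨f ⁻¹' Iio (m + δ), preimage_mem_comap (Iio_mem_nhds (lt_add_of_pos_right m hδ)),
      fun x hx y hy => hdist x y hx hy⟩⟩
  obtain ⟨x, hx⟩ := CompleteSpace.complete hcauchy
  have hfx : f x = m :=
    tendsto_nhds_unique ((hf.tendsto x).mono_left hx) tendsto_comap
  have hmin : ∀ {y}, IsMinOn f univ y → ∀ δ > 0, f y < m + δ := fun hy δ hδ => by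
    obtain ⟨z, hz⟩ := hlt δ hδ
    exact (hy (mem_univ z)).trans_lt hz
  refine ⟨x, fun z _ => hfx ▸ hm.1 (mem_range_self z), fun y hy => ?_⟩
  refine eq_of_forall_dist_le fun ε hε => ?_
  obtain ⟨δ, hδ, hdist⟩ := hwp ε hε
  exact (hdist y x (hmin hy δ hδ) (by linarith)).le

section MaxSignedDist

variable {X : Type*} [NormedAddCommGroup X] {ι : Type*} {s : Finset ι} (hs : s.Nonempty)
  (ω : ι → X) (r : ι → ℝ)

def maxSignedDist (x : X) : ℝ :=
  s.sup' hs fun i => ‖x - ω i‖ - r i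

theorem le_maxSignedDist {i : ι} (hi : i ∈ s) (x : X) :
    ‖x - ω i‖ - r i ≤ maxSignedDist hs ω r x :=
  Finset.le_sup' (fun i => ‖x - ω i‖ - r i) hi

theorem continuous_maxSignedDist : Continuous (maxSignedDist hs ω r) :=
  Continuous.finset_sup'_apply hs fun _ _ => by fun_prop

theorem bddBelow_range_maxSignedDist : BddBelow (range (maxSignedDist hs ω r)) := by
  have ⟨i, hi⟩ := hs
  exact ⟨-r i, forall_mem_range.2 fun x => by
    linarith [norm_nonneg (x - ω i), le_maxSignedDist hs ω r hi x]⟩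

theorem sup'_infDist_closedBall_eq_maxSignedDist [NormedSpace ℝ X] (hr : ∀ i ∈ s, 0 ≤ r i)
    {x : X} (hx : ∃ i ∈ s, x ∉ closedBall (ω i) (r i)) :
    s.sup' hs (fun i => infDist x (closedBall (ω i) (r i))) = maxSignedDist hs ω r x := by
  obtain ⟨j, hj, hxj⟩ := hx
  have hpos : 0 ≤ maxSignedDist hs ω r x := by
    rw [mem_closedBall, dist_eq_norm, not_le] at hxj
    linarith [le_maxSignedDist hs ω r hj x]
  calc s.sup' hs (fun i => infDist x (closedBall (ω i) (r i)))
      = s.sup' hs ((fun t => max t 0) ∘ fun i => ‖x - ω i‖ - r i) :=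
        Finset.sup'_congr hs rfl fun i hi => by
          rw [Function.comp_apply, infDist_closedBall _ _ (hr i hi), dist_eq_norm]
    _ = max (maxSignedDist hs ω r x) 0 :=
        (Finset.apply_sup'_eq_sup'_comp hs _ fun a b => sup_sup_distrib_right a b 0).symm
    _ = maxSignedDist hs ω r x := max_eq_left hpos

theorem dist_sq_le_of_maxSignedDist_lt [InnerProductSpace ℝ X] {δ : ℝ} (hδ : 0 ≤ δ) {x y : X}
    (hx : maxSignedDist hs ω r x < (⨅ z, maxSignedDist hs ω r z) + δ)
    (hy : maxSignedDist hs ω r y < (⨅ z, maxSignedDist hs ω r z) + δ) :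
    dist x y ^ 2 ≤ 4 * δ * (2 * ((⨅ z, maxSignedDist hs ω r z) + s.sup' hs r) + δ) := by
  set m := ⨅ z, maxSignedDist hs ω r z
  obtain ⟨i, hi, hactive⟩ := Finset.exists_mem_eq_sup' hs fun i => ‖midpoint ℝ x y - ω i‖ - r i
  have hmi : 0 ≤ m + r i := by
    have : -r i ≤ m := le_ciInf fun z => by
      linarith [norm_nonneg (z - ω i), le_maxSignedDist hs ω r hi z]
    linarith
  have hm_mid : m ≤ maxSignedDist hs ω r (midpoint ℝ x y) :=
    ciInf_le (bddBelow_range_maxSignedDist hs ω r) _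
  have hri : r i ≤ s.sup' hs r := Finset.le_sup' r hi
  have hxy := dist_sq_le_of_le_dist_midpoint (x := x) (y := y) (c := ω i) (a := m + r i + δ)
    (by rw [dist_eq_norm]; linarith [le_maxSignedDist hs ω r hi x])
    (by rw [dist_eq_norm]; linarith [le_maxSignedDist hs ω r hi y]) hmi
    (by rw [dist_eq_norm]; unfold maxSignedDist at hm_mid; linarith)
  nlinarith

theorem existsUnique_isMinOn_maxSignedDist [InnerProductSpace ℝ X] [CompleteSpace X] :
    ∃! x, IsMinOn (maxSignedDist hs ω r) univ x := by
  refine existsUnique_isMinOn_of_forall_dist_lt (continuous_maxSignedDist hs ω r)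
    (isGLB_ciInf (bddBelow_range_maxSignedDist hs ω r)) fun ε hε => ?_
  set K := (⨅ z, maxSignedDist hs ω r z) + s.sup' hs r
  have hlim : Tendsto (fun δ : ℝ => 4 * δ * (2 * K + δ)) (𝓝[>] 0) (𝓝 0) :=
    tendsto_nhdsWithin_of_tendsto_nhds (by simpa using (by fun_prop : Continuous
      (fun δ : ℝ => 4 * δ * (2 * K + δ))).tendsto 0)
  obtain ⟨δ, hδε, hδ⟩ :=
    ((hlim.eventually (gt_mem_nhds (pow_pos hε 2))).and self_mem_nhdsWithin).exists
  exact ⟨δ, hδ, fun x y hx hy => (pow_lt_pow_iff_left₀ dist_nonneg hε.le two_ne_zero).1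
    ((dist_sq_le_of_maxSignedDist_lt hs ω r (le_of_lt hδ) hx hy).trans_lt hδε)⟩

end MaxSignedDist

/-- For closed balls with possibly different radii and empty intersection in a
Hilbert space, D(x) = max_i d(x,Ωᵢ) = max_i (‖x-ωᵢ‖ - rᵢ), and D has a unique
minimizer. -/
theorem unique_min_balls_general_radii
    {X : Type*} [NormedAddCommGroup X] [InnerProductSpace ℝ X] [CompleteSpace X]
    (n : ℕ) (hn : 1 < n) (ω : Fin n → X) (r : Fin n → ℝ) (hr : ∀ i, 0 ≤ r i)
    (hint : (⋂ i, Metric.closedBall (ω i) (r i)) = ∅) :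
    (∀ x : X, (Finset.univ.sup' (Finset.univ_nonempty_iff.2 ⟨⟨0, by omega⟩⟩)
        fun i => Metric.infDist x (Metric.closedBall (ω i) (r i))) =
      Finset.univ.sup' (Finset.univ_nonempty_iff.2 ⟨⟨0, by omega⟩⟩)
        fun i => ‖x - ω i‖ - r i) ∧
    (∃! xbar : X, IsMinOn
      (fun x => Finset.univ.sup' (Finset.univ_nonempty_iff.2 ⟨⟨0, by omega⟩⟩)
        fun i => Metric.infDist x (Metric.closedBall (ω i) (r i))) Set.univ xbar) := by
  have hs : (Finset.univ : Finset (Fin n)).Nonempty := Finset.univ_nonempty_iff.2 ⟨⟨0, by omega⟩⟩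
  have hD : ∀ x : X, (Finset.univ.sup' hs fun i => infDist x (closedBall (ω i) (r i))) =
      maxSignedDist hs ω r x := fun x =>
    sup'_infDist_closedBall_eq_maxSignedDist hs ω r (fun i _ => hr i) <| by
      have hx : x ∉ ⋂ i, closedBall (ω i) (r i) := hint ▸ notMem_empty x
      simpa using hx
  exact ⟨hD, by simpa only [hD] using existsUnique_isMinOn_maxSignedDist hs ω r⟩
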